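/- arXiv:1609.04918 — 7 statements merged into one kernel-verified Lean document; each statement's English description precedes it below -/
import Mathlib

section
/- Priority Steiner Tree and Monotonic k-TSN are equivalent under strict approximation-preserving reductions: given a Priority Steiner Tree instance (without multiedges), letting each edge e of priority p(e) exist at all times t ≥ p(e) and converting each demand (a_i, b_i) of priority p(a_i,b_i) to the temporal demand (a_i, b_i, p(a_i,b_i)) yields a Monotonic k-TSN instance whose feasible solutions of cost C correspond exactly to Priority Steiner Tree solutions of cost C, and vice versa. -/
/-- Priority Steiner Tree feasibility: each demand `(a_i, b_i)` with priority `p_i`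
is routed by a path of edges of priority at most `p_i`. -/
def pstFeasible {V : Type*} {k : ℕ} (E0 : Finset (V × V)) (p : V × V → ℕ)
    (D : Fin k → (V × V) × ℕ) (F : Finset (V × V)) : Prop :=
  F ⊆ E0 ∧ ∀ i, Relation.ReflTransGen
    (fun u v => ((u, v) ∈ F ∧ p (u, v) ≤ (D i).2) ∨ ((v, u) ∈ F ∧ p (v, u) ≤ (D i).2))
    (D i).1.1 (D i).1.2

/-- The frame at time `t` of the constructed temporal instance: edge `e` of priority
`p e` exists at all times `t ≥ p e`. -/
def pstFrame {V : Type*} (E0 : Finset (V × V)) (p : V × V → ℕ) (t : ℕ) : Set (V × V) :=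
  {e | e ∈ E0 ∧ p e ≤ t}

/-- Temporal feasibility for the constructed (monotonic) k-TSN instance, with
demand `(a_i, b_i)` of priority `p_i` converted to the temporal demand
`(a_i, b_i, p_i)`. -/
def tsnFeasible {V : Type*} {k : ℕ} (E0 : Finset (V × V)) (p : V × V → ℕ)
    (D : Fin k → (V × V) × ℕ) (H : Finset (V × V)) : Prop :=
  H ⊆ E0 ∧ ∀ i, Relation.ReflTransGen
    (fun u v => ((u, v) ∈ H ∧ (u, v) ∈ pstFrame E0 p ((D i).2)) ∨
                ((v, u) ∈ H ∧ (v, u) ∈ pstFrame E0 p ((D i).2)))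
    (D i).1.1 (D i).1.2

theorem pstFrame_monotone {V : Type*} (E0 : Finset (V × V)) (p : V × V → ℕ) :
    Monotone (pstFrame E0 p) :=
  fun _ _ htt' _ he => ⟨he.1, he.2.trans htt'⟩

theorem mem_pstFrame_iff {V : Type*} {E0 : Finset (V × V)} {p : V × V → ℕ} {e : V × V}
    (he : e ∈ E0) (t : ℕ) : e ∈ pstFrame E0 p t ↔ p e ≤ t :=
  and_iff_right he

theorem pstFeasible_iff_tsnFeasible {V : Type*} {k : ℕ} (E0 : Finset (V × V))
    (p : V × V → ℕ) (D : Fin k → (V × V) × ℕ) (H : Finset (V × V)) :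
    pstFeasible E0 p D H ↔ tsnFeasible E0 p D H := by
  refine and_congr_right fun hH => forall_congr' fun i => iff_of_eq ?_
  congr 1
  ext u v
  exact or_congr (and_congr_right fun huv => (mem_pstFrame_iff (hH huv) _).symm)
    (and_congr_right fun hvu => (mem_pstFrame_iff (hH hvu) _).symm)

theorem stmt3_general {V : Type*} {k : ℕ}
    (E0 : Finset (V × V)) (w : V × V → ℝ)
    (p : V × V → ℕ) (D : Fin k → (V × V) × ℕ) :
    (∀ t t' : ℕ, t ≤ t' → pstFrame E0 p t ⊆ pstFrame E0 p t') ∧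
    (∀ (H : Finset (V × V)) (C : ℝ),
      (pstFeasible E0 p D H ∧ ∑ e ∈ H, w e = C) ↔
      (tsnFeasible E0 p D H ∧ ∑ e ∈ H, w e = C)) :=
  ⟨fun _ _ => (pstFrame_monotone E0 p ·),
    fun H _ => and_congr_left' (pstFeasible_iff_tsnFeasible E0 p D H)⟩

/-- the construction turns a Priority Steiner Tree instance (without
multiedges) into a *monotonic* k-TSN instance whose feasible solutions of cost `C`
correspond exactly (here: are identical, with identical cost) to the Priority
Steiner Tree solutions of cost `C`, and vice versa. -/
theorem stmt3 {V : Type*} [DecidableEq V] {k : ℕ}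
    (E0 : Finset (V × V)) (w : V × V → ℝ) (hw : ∀ e, 0 ≤ w e)
    (p : V × V → ℕ) (D : Fin k → (V × V) × ℕ) :
    (∀ t t' : ℕ, t ≤ t' → pstFrame E0 p t ⊆ pstFrame E0 p t') ∧
    (∀ (H : Finset (V × V)) (C : ℝ),
      (pstFeasible E0 p D H ∧ ∑ e ∈ H, w e = C) ↔
      (tsnFeasible E0 p D H ∧ ∑ e ∈ H, w e = C)) :=
  stmt3_general E0 w p D
end

section
/- Let H be a feasible solution to a Monotonic Single-Source k-DTSN instance with root a and demands (a, b_i, t_i) for i = 1,...,k, where t_1 ≤ ... ≤ t_k. Then there exists a subgraph T ⊆ H that is a directed tree rooted at a, is still feasible, has cost at most the cost of H, and has the property that along every root-to-target path in T the earliest necessary times of the edges are non-decreasing. -/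
/-!
Grow the tree greedily, serving the demands in order of increasing time: by monotonicity every
edge chosen so far is still present in the current frame, so the tree can be extended inside that
frame until it reaches the next target. Then pass to an inclusion-minimal feasible subgraph of
this tree: every edge of it is necessary for some demand, and it is still an arborescence.
In an arborescence `(u, v)` is the only edge into `v`, so a walk from the root that avoids
`(u, v)` never reaches `v` and hence avoids `(v, x)`. Thus every demand broken by deleting `(v, x)`
is broken by deleting `(u, v)`, so the earliest necessary time of `(u, v)` is at most that of
`(v, x)`.
-/

/-- Directed temporal satisfaction: a directed `a → b` path in `H` all of whose
edges lie in the frame `Et`. -/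
def dSat {V : Type*} (Et : Set (V × V)) (H : Finset (V × V)) (a b : V) : Prop :=
  Relation.ReflTransGen (fun u v => (u, v) ∈ H ∧ (u, v) ∈ Et) a b

/-- Earliest necessary time of an edge `e` of a feasible solution `H` of a
single-source k-DTSN instance: the minimum `t i` such that removing `e` from `H`
would leave demand `(a, b i, t i)` unsatisfied. -/
noncomputable def entTime {V : Type*} [DecidableEq V] {k : ℕ}
    (E : ℕ → Set (V × V)) (a : V) (b : Fin k → V) (t : Fin k → ℕ)
    (H : Finset (V × V)) (e : V × V) : ℕ :=
  sInf {n | ∃ i, t i = n ∧ ¬ dSat (E (t i)) (H.erase e) a (b i)}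

section

open Finset Relation

variable {V : Type*}

theorem dSat.mono {Et Et' : Set (V × V)} {H H' : Finset (V × V)} {a z : V}
    (h : dSat Et H a z) (hH : H ⊆ H') (hE : Et ⊆ Et') : dSat Et' H' a z :=
  ReflTransGen.mono (fun _ _ huv => ⟨hH huv.1, hE huv.2⟩) _ _ h

def Reach (T : Finset (V × V)) (a z : V) : Prop :=
  ReflTransGen (fun u v => (u, v) ∈ T) a z

theorem Reach.mono {T T' : Finset (V × V)} {a z : V} (h : Reach T a z) (hT : T ⊆ T') :
    Reach T' a z :=
  ReflTransGen.mono (fun _ _ huv => hT huv) _ _ h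

theorem Reach.dSat {Et : Set (V × V)} {T : Finset (V × V)} {a z : V} (h : Reach T a z)
    (hT : ↑T ⊆ Et) : dSat Et T a z :=
  ReflTransGen.mono (fun _ _ huv => ⟨huv, hT huv⟩) _ _ h

theorem dSat.reach {Et : Set (V × V)} {H : Finset (V × V)} {a z : V} (h : dSat Et H a z) :
    Reach H a z :=
  ReflTransGen.mono (fun _ _ huv => huv.1) _ _ h

theorem dSat_erase_of_not_dSat_fst [DecidableEq V] {Et : Set (V × V)} {H : Finset (V × V)}
    {a z : V} {e : V × V} (he : ¬ dSat Et H a e.1) (h : dSat Et H a z) :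
    dSat Et (H.erase e) a z := by
  induction h with
  | refl => exact .refl
  | @tail p q hp hpq ih =>
    refine ReflTransGen.tail ih ⟨mem_erase.2 ⟨?_, hpq.1⟩, hpq.2⟩
    rintro rfl
    exact he hp

theorem exists_subset_forall_not_dSat_erase [DecidableEq V] {ι τ : Type*}
    (E : τ → Set (V × V)) (a : V) (b : ι → V) (t : ι → τ) {T : Finset (V × V)}
    (hT : ∀ i, dSat (E (t i)) T a (b i)) :
    ∃ S ⊆ T, (∀ i, dSat (E (t i)) S a (b i)) ∧
      ∀ e ∈ S, ∃ i, ¬ dSat (E (t i)) (S.erase e) a (b i) := by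
  obtain ⟨S, hST, hmin⟩ := exists_minimal_le_of_wellFoundedLT
    (fun S => ∀ i, dSat (E (t i)) S a (b i)) T hT
  refine ⟨S, hST, hmin.prop, fun e he => ?_⟩
  by_contra! h
  exact hmin.not_prop_of_lt (erase_ssubset he) h

variable [DecidableEq V]

def IsArborescence (T : Finset (V × V)) (a : V) : Prop :=
  (∀ v : V, (T.filter (fun e => e.2 = v)).card ≤ 1) ∧ ∀ e ∈ T, Reach T a e.1 ∧ e.2 ≠ a

namespace IsArborescence

variable {T : Finset (V × V)} {a : V}

theorem empty (a : V) : IsArborescence (∅ : Finset (V × V)) a := by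
  simp [IsArborescence]

theorem insert_of_not_reach {c z : V} (hT : IsArborescence T a) (hc : Reach T a c)
    (hz : ¬ Reach T a z) : IsArborescence (insert (c, z) T) a := by
  have hsub : T ⊆ insert (c, z) T := subset_insert _ _
  refine ⟨fun v => ?_, fun e he => ?_⟩
  · rw [filter_insert]
    split_ifs with hzv
    · have hno_in_edge : T.filter (fun e => e.2 = v) = ∅ := by
        refine filter_eq_empty_iff.2 fun e he hev => hz ?_
        obtain ⟨p, q⟩ := e
        subst hzv hev
        exact ReflTransGen.tail (hT.2 _ he).1 he
      simp [hno_in_edge]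
    · exact hT.1 v
  · rcases mem_insert.1 he with rfl | he
    · exact ⟨hc.mono hsub, fun hza => hz (hza ▸ .refl)⟩
    · exact ⟨(hT.2 e he).1.mono hsub, (hT.2 e he).2⟩

theorem exists_extension {H : Finset (V × V)} {Et : Set (V × V)} {z : V}
    (hT : IsArborescence T a) (hTH : T ⊆ H) (hTE : ↑T ⊆ Et) (h : dSat Et H a z) :
    ∃ T', T ⊆ T' ∧ T' ⊆ H ∧ ↑T' ⊆ Et ∧ IsArborescence T' a ∧ Reach T' a z := by
  induction h with
  | refl => exact ⟨T, subset_rfl, hTH, hTE, hT, .refl⟩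
  | @tail c z _ hcz ih =>
    obtain ⟨T', hTT', hT'H, hT'E, hT', hc⟩ := ih
    by_cases hz : Reach T' a z
    · exact ⟨T', hTT', hT'H, hT'E, hT', hz⟩
    refine ⟨insert (c, z) T', hTT'.trans (subset_insert _ _), insert_subset hcz.1 hT'H, ?_,
      hT'.insert_of_not_reach hc hz, ReflTransGen.tail (hc.mono (subset_insert _ _))
        (mem_insert_self _ _)⟩
    rw [coe_insert]
    exact Set.insert_subset hcz.2 hT'E

theorem not_reach_erase {u v : V} (hT : IsArborescence T a) (huv : (u, v) ∈ T) :
    ¬ Reach (T.erase (u, v)) a v := by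
  intro h
  rcases ReflTransGen.cases_tail h with hva | ⟨p, -, hpv⟩
  · exact (hT.2 _ huv).2 hva
  · exact ne_of_mem_erase hpv <| card_le_one.1 (hT.1 v) (p, v)
      (mem_filter.2 ⟨mem_of_mem_erase hpv, rfl⟩) (u, v) (mem_filter.2 ⟨huv, rfl⟩)

theorem dSat_erase_of_dSat_erase {Et : Set (V × V)} {u v x z : V} (hT : IsArborescence T a)
    (huv : (u, v) ∈ T) (h : dSat Et (T.erase (u, v)) a z) : dSat Et (T.erase (v, x)) a z :=
  (dSat_erase_of_not_dSat_fst (fun hv => hT.not_reach_erase huv hv.reach) h).mono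
    (erase_subset_erase _ (erase_subset _ _)) subset_rfl

theorem of_subset_of_forall_not_dSat_erase {ι τ : Type*} {E : τ → Set (V × V)} {b : ι → V}
    {t : ι → τ} {S : Finset (V × V)} (hT : IsArborescence T a) (hST : S ⊆ T)
    (hS : ∀ i, dSat (E (t i)) S a (b i))
    (hnec : ∀ e ∈ S, ∃ i, ¬ dSat (E (t i)) (S.erase e) a (b i)) : IsArborescence S a := by
  refine ⟨fun v => (card_le_card (filter_subset_filter _ hST)).trans (hT.1 v),
    fun e he => ⟨?_, (hT.2 e (hST he)).2⟩⟩
  obtain ⟨i, hi⟩ := hnec e he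
  by_contra hr
  exact hi (dSat_erase_of_not_dSat_fst (fun h => hr h.reach) (hS i))

end IsArborescence

theorem exists_arborescence_forall_dSat {ι τ : Type*} [DecidableEq ι] [LinearOrder τ]
    {E : τ → Set (V × V)} (hE : Monotone E) (a : V) (b : ι → V) (t : ι → τ)
    {H : Finset (V × V)} (D : Finset ι) (hH : ∀ i ∈ D, dSat (E (t i)) H a (b i)) :
    ∃ T ⊆ H, IsArborescence T a ∧ (∀ e ∈ T, ∃ i ∈ D, e ∈ E (t i)) ∧
      ∀ i ∈ D, dSat (E (t i)) T a (b i) := by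
  induction D using induction_on_max_value t with
  | empty => exact ⟨∅, empty_subset _, .empty a, by simp, by simp⟩
  | insert j D _ hmax ih =>
    obtain ⟨T, hTH, hT, hTE, hTD⟩ := ih fun i hi => hH i (mem_insert_of_mem hi)
    have hTEj : ↑T ⊆ E (t j) := fun e he => by
      obtain ⟨i, hi, hei⟩ := hTE e he
      exact hE (hmax i hi) hei
    obtain ⟨T', hTT', hT'H, hT'E, hT', hreach⟩ :=
      hT.exists_extension hTH hTEj (hH j (mem_insert_self j D))
    refine ⟨T', hT'H, hT', fun e he => ⟨j, mem_insert_self j D, hT'E he⟩, fun i hi => ?_⟩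
    rcases mem_insert.1 hi with rfl | hi
    · exact hreach.dSat hT'E
    · exact (hTD i hi).mono hTT' subset_rfl

theorem entTime_le_entTime {k : ℕ} {E : ℕ → Set (V × V)} {a : V} {b : Fin k → V}
    {t : Fin k → ℕ} {H : Finset (V × V)} {e e' : V × V}
    (h : ∀ i, dSat (E (t i)) (H.erase e) a (b i) → dSat (E (t i)) (H.erase e') a (b i))
    (he' : ∃ i, ¬ dSat (E (t i)) (H.erase e') a (b i)) :
    entTime E a b t H e ≤ entTime E a b t H e' := by
  obtain ⟨i, hi⟩ := he'
  exact csInf_le_csInf' ⟨t i, i, rfl, hi⟩ fun n ⟨j, hj, hnj⟩ => ⟨j, hj, mt (h j) hnj⟩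

end

theorem stmt4_general {V : Type*} [DecidableEq V] {k : ℕ}
    (E : ℕ → Set (V × V)) (hmono : Monotone E)
    (w : V × V → ℝ) (hw : ∀ e, 0 ≤ w e)
    (a : V) (b : Fin k → V) (t : Fin k → ℕ)
    (H : Finset (V × V)) (hfeas : ∀ i, dSat (E (t i)) H a (b i)) :
    ∃ T : Finset (V × V),
      T ⊆ H ∧
      -- T is a directed tree (arborescence) rooted at a:
      (∀ v : V, (T.filter (fun e => e.2 = v)).card ≤ 1) ∧
      (∀ e ∈ T, Relation.ReflTransGen (fun u v => (u, v) ∈ T) a e.1 ∧ e.2 ≠ a) ∧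
      -- T is still feasible:
      (∀ i, dSat (E (t i)) T a (b i)) ∧
      -- cost at most that of H:
      (∑ e ∈ T, w e) ≤ (∑ e ∈ H, w e) ∧
      -- earliest necessary times non-decreasing along every root-to-target path:
      (∀ u v x : V, (u, v) ∈ T → (v, x) ∈ T →
        entTime E a b t T (u, v) ≤ entTime E a b t T (v, x)) := by
  obtain ⟨T₀, hT₀H, hT₀, -, hT₀feas⟩ :=
    exists_arborescence_forall_dSat hmono a b t Finset.univ fun i _ => hfeas i
  obtain ⟨T, hTT₀, hTfeas, hnec⟩ :=
    exists_subset_forall_not_dSat_erase E a b t fun i => hT₀feas i (Finset.mem_univ i)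
  have hT : IsArborescence T a := hT₀.of_subset_of_forall_not_dSat_erase hTT₀ hTfeas hnec
  have hTH : T ⊆ H := hTT₀.trans hT₀H
  refine ⟨T, hTH, hT.1, hT.2, hTfeas,
    Finset.sum_le_sum_of_subset_of_nonneg hTH fun e _ _ => hw e, ?_⟩
  intro u v x huv hvx
  exact entTime_le_entTime (fun i => hT.dSat_erase_of_dSat_erase huv) (hnec _ hvx)

/-- any feasible solution `H` of a Monotonic Single-Source k-DTSN
instance (frames monotone, demands `(a, b i, t i)` with `t` sorted) contains a
feasible directed tree `T ⊆ H` rooted at `a` of cost at most that of `H`, in which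
earliest necessary times are non-decreasing along every root-to-target path
(equivalently, along every pair of consecutive edges). -/
theorem stmt4 {V : Type*} [DecidableEq V] {k : ℕ}
    (E : ℕ → Set (V × V)) (hmono : Monotone E)
    (w : V × V → ℝ) (hw : ∀ e, 0 ≤ w e)
    (a : V) (b : Fin k → V) (t : Fin k → ℕ) (ht : Monotone t)
    (H : Finset (V × V)) (hfeas : ∀ i, dSat (E (t i)) H a (b i)) :
    ∃ T : Finset (V × V),
      T ⊆ H ∧
      -- T is a directed tree (arborescence) rooted at a:
      (∀ v : V, (T.filter (fun e => e.2 = v)).card ≤ 1) ∧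
      (∀ e ∈ T, Relation.ReflTransGen (fun u v => (u, v) ∈ T) a e.1 ∧ e.2 ≠ a) ∧
      -- T is still feasible:
      (∀ i, dSat (E (t i)) T a (b i)) ∧
      -- cost at most that of H:
      (∑ e ∈ T, w e) ≤ (∑ e ∈ H, w e) ∧
      -- earliest necessary times non-decreasing along every root-to-target path:
      (∀ u v x : V, (u, v) ∈ T → (v, x) ∈ T →
        entTime E a b t T (u, v) ≤ entTime E a b t T (v, x)) :=
  stmt4_general E hmono w hw a b t H hfeas
end

section
/- If a Monotonic Single-Source k-DTSN instance has a feasible solution of cost C, then the Directed Steiner Tree instance constructed by the layered reduction has a feasible solution of cost at most C. -/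
/-!
Let `ℓ v` be the first frame in which `v` is reachable from `a` inside `H`. Put every edge
`(u, v)` of `H` into the layered graph only once, at level `ℓ v`, and add the free level-advancing
edges. A path of frame `n` is then rebuilt inductively: an edge `u → v` of it with `ℓ v = n` is
its level-`n` copy, and otherwise `v` is reached at the lower level `ℓ v` and lifted to level `n`
for free. Since each edge of `H` is used at most once, the cost does not increase.
-/

/-- Edges of the layered Directed Steiner Tree graph `G'` built from the temporal
directed graph with frames `E i`: a level-`i` copy `((u,i),(v,i))` of each edge
`(u,v) ∈ E i`, plus zero-weight level-advancing edges `((v,i),(v,i+1))`. -/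
def layerEdges {V : Type*} (E : ℕ → Set (V × V)) : Set ((V × ℕ) × (V × ℕ)) :=
  {p | (p.1.2 = p.2.2 ∧ (p.1.1, p.2.1) ∈ E p.1.2) ∨ (p.1.1 = p.2.1 ∧ p.2.2 = p.1.2 + 1)}

/-- Weights in the layered graph: level edges keep their weight, level-advancing
edges are free. -/
def layerWeight {V : Type*} (w : V × V → ℝ) (p : (V × ℕ) × (V × ℕ)) : ℝ :=
  if p.1.2 = p.2.2 then w (p.1.1, p.2.1) else 0

open Relation Finset

section FirstLevel

variable {α : Type*} (S : ℕ → α → α → Prop) (a : α)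

noncomputable def firstLevel (v : α) : ℕ := sInf {n | ReflTransGen (S n) a v}

variable {S a}

theorem firstLevel_le {n : ℕ} {v : α} (h : ReflTransGen (S n) a v) : firstLevel S a v ≤ n :=
  Nat.sInf_le h

theorem reflTransGen_firstLevel {n : ℕ} {v : α} (h : ReflTransGen (S n) a v) :
    ReflTransGen (S (firstLevel S a v)) a v :=
  Nat.sInf_mem (s := {n | ReflTransGen (S n) a v}) ⟨n, h⟩

theorem reflTransGen_level_lift {T : α × ℕ → α × ℕ → Prop} {v : α} {N : ℕ}
    (hadv : ∀ j < N, T (v, j) (v, j + 1)) {m m' : ℕ} (hm : m ≤ m') (hN : m' ≤ N) :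
    ReflTransGen T (v, m) (v, m') := by
  induction m', hm using Nat.le_induction with
  | base => exact .refl
  | succ j _ ih => exact (ih (by omega)).tail (hadv j (by omega))

theorem reflTransGen_layered_of_reflTransGen {T : α × ℕ → α × ℕ → Prop} {A : Set α} {N : ℕ}
    (ha : a ∈ A) (hA : ∀ n u v, S n u v → v ∈ A)
    (hadv : ∀ v ∈ A, ∀ j < N, T (v, j) (v, j + 1))
    (hlvl : ∀ u v, S (firstLevel S a v) u v →
      T (u, firstLevel S a v) (v, firstLevel S a v))
    {n : ℕ} (hn : n ≤ N) {v : α} (hv : ReflTransGen (S n) a v) :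
    ReflTransGen T (a, 0) (v, n) := by
  induction n using Nat.strong_induction_on generalizing v with
  | _ n ihn =>
    induction hv with
    | refl => exact reflTransGen_level_lift (hadv a ha) n.zero_le hn
    | @tail u v hu huv ih =>
      have hv : ReflTransGen (S n) a v := hu.tail huv
      rcases (firstLevel_le hv).lt_or_eq with hlt | heq
      · exact (ihn _ hlt (by omega) (reflTransGen_firstLevel hv)).trans
          (reflTransGen_level_lift (hadv v (hA n u v huv)) hlt.le hn)
      · have hcopy := hlvl u v (heq ▸ huv)
        rw [heq] at hcopy
        exact ih.tail hcopy

end FirstLevel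

section LayeredEdges

open Classical

variable {V : Type*}

noncomputable def levelCopies (E : ℕ → Set (V × V)) (H : Finset (V × V)) (ℓ : V → ℕ) :
    Finset ((V × ℕ) × (V × ℕ)) :=
  {e ∈ H | e ∈ E (ℓ e.2)}.image fun e => ((e.1, ℓ e.2), (e.2, ℓ e.2))

noncomputable def levelAdvances (A : Finset V) (N : ℕ) : Finset ((V × ℕ) × (V × ℕ)) :=
  (A ×ˢ range N).image fun p => ((p.1, p.2), (p.1, p.2 + 1))

theorem levelCopies_subset_layerEdges (E : ℕ → Set (V × V)) (H : Finset (V × V)) (ℓ : V → ℕ) :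
    ↑(levelCopies E H ℓ) ⊆ layerEdges E := by
  intro p hp
  obtain ⟨e, he, rfl⟩ := mem_image.mp (mem_coe.mp hp)
  exact Or.inl ⟨rfl, (mem_filter.mp he).2⟩

theorem levelAdvances_subset_layerEdges (E : ℕ → Set (V × V)) (A : Finset V) (N : ℕ) :
    ↑(levelAdvances A N) ⊆ layerEdges E := by
  intro p hp
  obtain ⟨q, -, rfl⟩ := mem_image.mp hp
  exact Or.inr ⟨rfl, rfl⟩

theorem mem_levelCopies {E : ℕ → Set (V × V)} {H : Finset (V × V)} {ℓ : V → ℕ} {u v : V}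
    (hH : (u, v) ∈ H) (hE : (u, v) ∈ E (ℓ v)) :
    ((u, ℓ v), (v, ℓ v)) ∈ levelCopies E H ℓ :=
  mem_image.mpr ⟨(u, v), mem_filter.mpr ⟨hH, hE⟩, rfl⟩

theorem mem_levelAdvances {A : Finset V} {N : ℕ} {v : V} (hv : v ∈ A) {j : ℕ} (hj : j < N) :
    ((v, j), (v, j + 1)) ∈ levelAdvances A N :=
  mem_image.mpr ⟨(v, j), mem_product.mpr ⟨hv, mem_range.mpr hj⟩, rfl⟩

theorem layerWeight_of_mem_levelAdvances (w : V × V → ℝ) {A : Finset V} {N : ℕ}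
    {p : (V × ℕ) × (V × ℕ)} (hp : p ∈ levelAdvances A N) : layerWeight w p = 0 := by
  obtain ⟨q, -, rfl⟩ := mem_image.mp hp
  simp [layerWeight]

theorem sum_layerWeight_levelCopies_le {w : V × V → ℝ} (hw : ∀ e, 0 ≤ w e)
    (E : ℕ → Set (V × V)) (H : Finset (V × V)) (ℓ : V → ℕ) :
    ∑ p ∈ levelCopies E H ℓ, layerWeight w p ≤ ∑ e ∈ H, w e := by
  have hnonneg : ∀ p, 0 ≤ layerWeight w p := fun p => by
    unfold layerWeight; split_ifs <;> simp [hw]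
  calc ∑ p ∈ levelCopies E H ℓ, layerWeight w p
      ≤ ∑ e ∈ H with e ∈ E (ℓ e.2), w e := by
        refine (sum_image_le_of_nonneg fun p _ => hnonneg p).trans_eq ?_
        simp [layerWeight]
    _ ≤ ∑ e ∈ H, w e := sum_le_sum_of_subset_of_nonneg (filter_subset _ _) fun e _ _ => hw e

theorem sum_layerWeight_union_levelAdvances (w : V × V → ℝ) (L : Finset ((V × ℕ) × (V × ℕ)))
    (A : Finset V) (N : ℕ) :
    ∑ p ∈ L ∪ levelAdvances A N, layerWeight w p = ∑ p ∈ L, layerWeight w p :=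
  (sum_subset subset_union_left fun _ hp hpL =>
    layerWeight_of_mem_levelAdvances w ((mem_union.mp hp).resolve_left hpL)).symm

end LayeredEdges

theorem stmt5_general {V : Type*} {k : ℕ}
    (E : ℕ → Set (V × V))
    (w : V × V → ℝ) (hw : ∀ e, 0 ≤ w e)
    (a : V) (b : Fin k → V) (t : Fin k → ℕ)
    (H : Finset (V × V))
    (hfeas : ∀ i, Relation.ReflTransGen
      (fun u v => (u, v) ∈ H ∧ (u, v) ∈ E (t i)) a (b i)) :
    ∃ H' : Finset ((V × ℕ) × (V × ℕ)),
      (↑H' ⊆ layerEdges E) ∧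
      (∀ i, Relation.ReflTransGen (fun x y => (x, y) ∈ H') (a, 0) (b i, t i)) ∧
      (∑ e ∈ H', layerWeight w e) ≤ ∑ e ∈ H, w e := by
  classical
  set ℓ := firstLevel (fun n u v => (u, v) ∈ H ∧ (u, v) ∈ E n) a
  set A := insert a (H.image Prod.snd)
  refine ⟨levelCopies E H ℓ ∪ levelAdvances A (univ.sup t), ?_, fun i => ?_, ?_⟩
  · simpa only [coe_union, Set.union_subset_iff] using
      ⟨levelCopies_subset_layerEdges E H ℓ, levelAdvances_subset_layerEdges E A _⟩
  · refine reflTransGen_layered_of_reflTransGen (A := ↑A) (mem_insert_self a _)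
      (fun n u v huv => mem_insert_of_mem (mem_image_of_mem Prod.snd huv.1))
      (fun v hv j hj => mem_union_right _ (mem_levelAdvances hv hj))
      (fun u v huv => mem_union_left _ (mem_levelCopies huv.1 huv.2))
      (le_sup (mem_univ i)) (hfeas i)
  · rw [sum_layerWeight_union_levelAdvances]
    exact sum_layerWeight_levelCopies_le hw E H ℓ

/-- if a Monotonic Single-Source k-DTSN instance (root `a`, demands
`(a, b i, t i)`) has a feasible solution of cost `C`, then the layered Directed
Steiner Tree instance (demands `(a^0, (b i)^{t i})`) has a feasible solution of
cost at most `C`. -/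
theorem stmt5 {V : Type*} [DecidableEq V] {k : ℕ}
    (E : ℕ → Set (V × V)) (hmono : Monotone E)
    (w : V × V → ℝ) (hw : ∀ e, 0 ≤ w e)
    (a : V) (b : Fin k → V) (t : Fin k → ℕ) (ht : Monotone t)
    (H : Finset (V × V))
    (hfeas : ∀ i, Relation.ReflTransGen
      (fun u v => (u, v) ∈ H ∧ (u, v) ∈ E (t i)) a (b i)) :
    ∃ H' : Finset ((V × ℕ) × (V × ℕ)),
      (↑H' ⊆ layerEdges E) ∧
      (∀ i, Relation.ReflTransGen (fun x y => (x, y) ∈ H') (a, 0) (b i, t i)) ∧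
      (∑ e ∈ H', layerWeight w e) ≤ ∑ e ∈ H, w e :=
  stmt5_general E w hw a b t H hfeas
end

section
/- If the layered Directed Steiner Tree instance constructed from a Monotonic Single-Source k-DTSN instance has a solution of cost C, then the original k-DTSN instance has a feasible solution of cost at most C; specifically, projecting each used edge (u^i, v^i) of the DST solution to the edge (u,v) of the underlying temporal graph yields such a solution. -/
/-- Projection of a layered DST solution back to the underlying temporal graph:
each used level edge `((u,i),(v,i))` is mapped to `(u,v)`; each underlying edge is
counted once. -/
def projSol {V : Type*} [DecidableEq V] (H' : Finset ((V × ℕ) × (V × ℕ))) :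
    Finset (V × V) :=
  (H'.filter (fun e => e.1.2 = e.2.2)).image (fun e => (e.1.1, e.2.1))

/-! Along a path of the layered graph the level never decreases, and the level edges it uses
lie in `E` at the level of the path's endpoint, because `E` is monotone. Projecting therefore
yields a walk in `E (t i)` for every demand `(a, 0) → (b i, t i)`. The projection counts every
underlying edge once, and the advancing edges are free, so its cost is at most that of `H'`. -/

section Layered

variable {V : Type*}

lemma level_le_of_mem_layerEdges {E : ℕ → Set (V × V)} {p : (V × ℕ) × (V × ℕ)}
    (hp : p ∈ layerEdges E) : p.1.2 ≤ p.2.2 := by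
  rcases hp with ⟨hlev, -⟩ | ⟨-, hlev⟩ <;> omega

variable [DecidableEq V]

lemma mem_projSol {H' : Finset ((V × ℕ) × (V × ℕ))} {x y : V × ℕ}
    (hxy : (x, y) ∈ H') (hlev : x.2 = y.2) : (x.1, y.1) ∈ projSol H' :=
  Finset.mem_image.2 ⟨(x, y), Finset.mem_filter.2 ⟨hxy, hlev⟩, rfl⟩

lemma reflTransGen_projSol_of_reflTransGen {E : ℕ → Set (V × V)} (hmono : Monotone E)
    {H' : Finset ((V × ℕ) × (V × ℕ))} (hsub : ↑H' ⊆ layerEdges E) {x y : V × ℕ}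
    (h : Relation.ReflTransGen (fun x y => (x, y) ∈ H') x y) :
    Relation.ReflTransGen (fun u v => (u, v) ∈ projSol H' ∧ (u, v) ∈ E y.2) x.1 y.1 := by
  induction h with
  | refl => exact .refl
  | @tail y z _ hyz ih =>
    have hlift : Relation.ReflTransGen
        (fun u v => (u, v) ∈ projSol H' ∧ (u, v) ∈ E z.2) x.1 y.1 :=
      Relation.ReflTransGen.mono (fun _ _ h =>
        ⟨h.1, hmono (level_le_of_mem_layerEdges (hsub hyz)) h.2⟩) _ _ ih
    rcases hsub hyz with ⟨hlev, hE⟩ | ⟨hver, -⟩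
    · exact hlift.tail ⟨mem_projSol hyz hlev, hlev ▸ hE⟩
    · exact hver ▸ hlift

lemma sum_projSol_le_sum_layerWeight {w : V × V → ℝ} (hw : ∀ e, 0 ≤ w e)
    (H' : Finset ((V × ℕ) × (V × ℕ))) :
    ∑ e ∈ projSol H', w e ≤ ∑ e ∈ H', layerWeight w e :=
  calc ∑ e ∈ projSol H', w e
      ≤ ∑ e ∈ H'.filter (fun e => e.1.2 = e.2.2), w (e.1.1, e.2.1) :=
        Finset.sum_image_le_of_nonneg fun e _ => hw e
    _ = ∑ e ∈ H', layerWeight w e := Finset.sum_filter _ _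

end Layered

theorem stmt6_general {V : Type*} [DecidableEq V] {k : ℕ}
    (E : ℕ → Set (V × V)) (hmono : Monotone E)
    (w : V × V → ℝ) (hw : ∀ e, 0 ≤ w e)
    (a : V) (b : Fin k → V) (t : Fin k → ℕ)
    (H' : Finset ((V × ℕ) × (V × ℕ))) (hsub : ↑H' ⊆ layerEdges E)
    (hfeas' : ∀ i, Relation.ReflTransGen (fun x y => (x, y) ∈ H') (a, 0) (b i, t i)) :
    (∀ i, Relation.ReflTransGen
      (fun u v => (u, v) ∈ projSol H' ∧ (u, v) ∈ E (t i)) a (b i)) ∧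
    (∑ e ∈ projSol H', w e) ≤ ∑ e ∈ H', layerWeight w e :=
  ⟨fun i => reflTransGen_projSol_of_reflTransGen hmono hsub (hfeas' i),
    sum_projSol_le_sum_layerWeight hw H'⟩

/-- if the layered DST instance built from a monotonic single-source
temporal instance has a solution of cost `C`, then projecting its level edges to
the underlying graph gives a feasible temporal solution of cost at most `C`. -/
theorem stmt6 {V : Type*} [DecidableEq V] {k : ℕ}
    (E : ℕ → Set (V × V)) (hmono : Monotone E)
    (w : V × V → ℝ) (hw : ∀ e, 0 ≤ w e)
    (a : V) (b : Fin k → V) (t : Fin k → ℕ) (ht : Monotone t)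
    (H' : Finset ((V × ℕ) × (V × ℕ))) (hsub : ↑H' ⊆ layerEdges E)
    (hfeas' : ∀ i, Relation.ReflTransGen (fun x y => (x, y) ∈ H') (a, 0) (b i, t i)) :
    (∀ i, Relation.ReflTransGen
      (fun u v => (u, v) ∈ projSol H' ∧ (u, v) ∈ E (t i)) a (b i)) ∧
    (∑ e ∈ projSol H', w e) ≤ ∑ e ∈ H', layerWeight w e :=
  stmt6_general E hmono w hw a b t H' hsub hfeas'
end

section
/- In the k-demand hardness reduction from k-Partite Hypergraph Label Cover to k-DTSN: if there is a labeling that strongly satisfies every hyperedge, then the constructed k-DTSN instance has a feasible solution of cost exactly |E| (the number of hyperedges), which is optimal. -/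
namespace TSNk

variable {k : ℕ} {Vp : Fin k → Type} {Lab C : Type}

/-- A label tuple `ℓ` (one label per part) is *agreeing* for hyperedge `e` if all
its labels are mapped to the same color by the projection functions of `e`. -/
def Agreeing (π : ((t : Fin k) → Vp t) → Fin k → Lab → C)
    (e : (t : Fin k) → Vp t) (ℓ : Fin k → Lab) : Prop :=
  ∀ s s', π e s (ℓ s) = π e s' (ℓ s')

/-- A candidate solution to the constructed k-DTSN instance: for each time `t`, the
source-to-sink path at time `t` is determined by a labeling `(sol t).1` of part `t`
(choosing a strand in each vertex-bundle) and, in each hyperedge-bundle, a chosen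
label combination `(sol t).2 e`. -/
def Sol (Vp : Fin k → Type) (Lab : Type) :=
  (t : Fin k) → ((Vp t → Lab) × (((s : Fin k) → Vp s) → Fin k → Lab))

/-- Validity: the chosen combination extends the strand's label, and is either an
agreeing combination (a merged contact edge) or a dummy strand when no agreeing
combination extending the strand's label exists. -/
def Valid (π : ((t : Fin k) → Vp t) → Fin k → Lab → C)
    (E : Finset ((t : Fin k) → Vp t)) (sol : Sol Vp Lab) : Prop :=
  ∀ t, ∀ e ∈ E,
    (sol t).2 e t = (sol t).1 (e t) ∧
    (Agreeing π e ((sol t).2 e) ∨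
      ¬ ∃ ℓ : Fin k → Lab, Agreeing π e ℓ ∧ ℓ t = (sol t).1 (e t))

variable [∀ t, DecidableEq (Vp t)] [DecidableEq Lab] [DecidableEq C]

instance (π : ((t : Fin k) → Vp t) → Fin k → Lab → C)
    (e : (t : Fin k) → Vp t) (ℓ : Fin k → Lab) : Decidable (Agreeing π e ℓ) :=
  inferInstanceAs (Decidable (∀ s s', π e s (ℓ s) = π e s' (ℓ s')))

/-- Contact edges traversed by the time-`t` path: one per hyperedge, identified by
the chosen agreeing label combination (merged across times) or by a dummy tag. -/
def contacts (π : ((t : Fin k) → Vp t) → Fin k → Lab → C)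
    (E : Finset ((t : Fin k) → Vp t)) (sol : Sol Vp Lab) (t : Fin k) :
    Finset (((s : Fin k) → Vp s) × ((Fin k → Lab) ⊕ Fin k)) :=
  E.image (fun e => (e, if Agreeing π e ((sol t).2 e)
    then Sum.inl ((sol t).2 e) else Sum.inr t))

/-- Cost: number of distinct contact edges used over all times (each contact edge
has weight 1; merged contact edges are counted once). -/
def cost (π : ((t : Fin k) → Vp t) → Fin k → Lab → C)
    (E : Finset ((t : Fin k) → Vp t)) (sol : Sol Vp Lab) : ℕ :=
  (Finset.univ.biUnion (contacts π E sol)).card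

end TSNk

/-! Each time-`t` path crosses every hyperedge-bundle through exactly one contact edge, so
already a single time costs `|E|`. A strongly satisfying labeling `φ` picks in the bundle of `e`
the agreeing combination `s ↦ φ s (e s)` at every time, so the paths of all times share their
contact edges and the total cost is `|E|`. -/

namespace TSNk

variable {k : ℕ} {Vp : Fin k → Type} {Lab C : Type}
  {π : ((t : Fin k) → Vp t) → Fin k → Lab → C} {E : Finset ((t : Fin k) → Vp t)}

def labelingSol (φ : (t : Fin k) → Vp t → Lab) : Sol Vp Lab :=
  fun t => (φ t, fun e s => φ s (e s))

theorem valid_labelingSol {φ : (t : Fin k) → Vp t → Lab}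
    (hφ : ∀ e ∈ E, Agreeing π e (fun s => φ s (e s))) : Valid π E (labelingSol φ) :=
  fun _ e he => ⟨rfl, Or.inl (hφ e he)⟩

variable [∀ t, DecidableEq (Vp t)] [DecidableEq Lab] [DecidableEq C]

theorem card_contacts (sol : Sol Vp Lab) (t : Fin k) : (contacts π E sol t).card = E.card :=
  Finset.card_image_of_injOn fun _ _ _ _ h => (Prod.ext_iff.1 h).1

theorem card_le_cost (sol : Sol Vp Lab) (t : Fin k) : E.card ≤ cost π E sol :=
  card_contacts (π := π) sol t ▸
    Finset.card_le_card (Finset.subset_biUnion_of_mem _ (Finset.mem_univ t))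

theorem cost_eq_card_of_contacts_eq {sol : Sol Vp Lab} (t₀ : Fin k)
    (h : ∀ t, contacts π E sol t = contacts π E sol t₀) : cost π E sol = E.card := by
  have hunion : Finset.univ.biUnion (contacts π E sol) = contacts π E sol t₀ := by
    ext x
    simp only [Finset.mem_biUnion, Finset.mem_univ, true_and, h, exists_const_iff]
    exact and_iff_right ⟨t₀⟩
  rw [cost, hunion, card_contacts]

theorem contacts_labelingSol {φ : (t : Fin k) → Vp t → Lab}
    (hφ : ∀ e ∈ E, Agreeing π e (fun s => φ s (e s))) (t : Fin k) :
    contacts π E (labelingSol φ) t = E.image fun e => (e, Sum.inl fun s => φ s (e s)) :=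
  Finset.image_congr fun e he => by
    rw [show (labelingSol φ t).2 e = fun s => φ s (e s) from rfl, if_pos (hφ e he)]

theorem cost_labelingSol {φ : (t : Fin k) → Vp t → Lab}
    (hφ : ∀ e ∈ E, Agreeing π e (fun s => φ s (e s))) (t₀ : Fin k) :
    cost π E (labelingSol φ) = E.card :=
  cost_eq_card_of_contacts_eq t₀ fun t =>
    (contacts_labelingSol hφ t).trans (contacts_labelingSol hφ t₀).symm

/-- if there is a labeling strongly satisfying every hyperedge, then
the constructed k-DTSN instance has a feasible solution of cost exactly `|E|`,
which is optimal. -/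
theorem stmt10 (hk : 0 < k)
    (π : ((t : Fin k) → Vp t) → Fin k → Lab → C)
    (E : Finset ((t : Fin k) → Vp t))
    (hyes : ∃ φ : (t : Fin k) → Vp t → Lab,
      ∀ e ∈ E, Agreeing π e (fun s => φ s (e s))) :
    (∃ sol : Sol Vp Lab, Valid π E sol ∧ cost π E sol = E.card) ∧
    (∀ sol : Sol Vp Lab, Valid π E sol → E.card ≤ cost π E sol) := by
  obtain ⟨φ, hφ⟩ := hyes
  let t₀ : Fin k := ⟨0, hk⟩
  exact ⟨⟨labelingSol φ, valid_labelingSol hφ, cost_labelingSol hφ t₀⟩,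
    fun sol _ => card_le_cost sol t₀⟩

end TSNk
end

section
/- In the k-demand hardness reduction from k-Partite Hypergraph Label Cover to k-DTSN: if every labeling weakly satisfies at most ε|E| hyperedges, then every feasible solution to the constructed k-DTSN instance has cost at least (1 − ε)·|E|·k. -/
/-!
Fix a feasible solution and let `φ` be the labeling it induces (time `t` labels part `t`).
On a hyperedge `e`, the paths of two different times can only share a contact edge if they
chose the same agreeing label combination; as each combination extends the label of its own
time, `φ` then weakly satisfies `e`. So every hyperedge not weakly satisfied by `φ` carries
`k` distinct contact edges, and at least `(1 - ε)|E|` hyperedges are of this kind.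
-/

namespace TSNk

open Finset

variable {k : ℕ} {Vp : Fin k → Type} {Lab C : Type}

def inducedLabeling (sol : Sol Vp Lab) (t : Fin k) : Vp t → Lab := (sol t).1

def WeaklySatisfies (π : ((t : Fin k) → Vp t) → Fin k → Lab → C)
    (φ : (t : Fin k) → Vp t → Lab) (e : (t : Fin k) → Vp t) : Prop :=
  ∃ s s' : Fin k, s ≠ s' ∧ π e s (φ s (e s)) = π e s' (φ s' (e s'))

section

variable [DecidableEq C]

instance (π : ((t : Fin k) → Vp t) → Fin k → Lab → C)
    (φ : (t : Fin k) → Vp t → Lab) (e : (t : Fin k) → Vp t) :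
    Decidable (WeaklySatisfies π φ e) :=
  inferInstanceAs (Decidable (∃ s s' : Fin k, s ≠ s' ∧ _))

def contactTag (π : ((t : Fin k) → Vp t) → Fin k → Lab → C) (sol : Sol Vp Lab)
    (e : (t : Fin k) → Vp t) (t : Fin k) : (Fin k → Lab) ⊕ Fin k :=
  if Agreeing π e ((sol t).2 e) then Sum.inl ((sol t).2 e) else Sum.inr t

variable {π : ((t : Fin k) → Vp t) → Fin k → Lab → C}
  {E : Finset ((t : Fin k) → Vp t)} {sol : Sol Vp Lab}

/-- Two times sharing a contact edge on `e` have both chosen the same agreeing label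
combination, which extends both of their labels. -/
theorem weaklySatisfies_of_contactTag_eq (hval : Valid π E sol) {e : (t : Fin k) → Vp t}
    (he : e ∈ E) {t t' : Fin k} (hne : t ≠ t')
    (heq : contactTag π sol e t = contactTag π sol e t') :
    WeaklySatisfies π (inducedLabeling sol) e := by
  unfold contactTag at heq
  split_ifs at heq with hagr hagr'
  · have hsame : (sol t).2 e = (sol t').2 e := Sum.inl_injective heq
    refine ⟨t, t', hne, ?_⟩
    have h := hagr t t'
    rwa [(hval t e he).1, hsame, (hval t' e he).1] at h
  · exact absurd (Sum.inr_injective heq) hne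

theorem injective_contactTag (hval : Valid π E sol) {e : (t : Fin k) → Vp t} (he : e ∈ E)
    (hns : ¬ WeaklySatisfies π (inducedLabeling sol) e) :
    Function.Injective (contactTag π sol e) := by
  intro t t' heq
  by_contra hne
  exact hns (weaklySatisfies_of_contactTag_eq hval he hne heq)

variable [∀ t, DecidableEq (Vp t)] [DecidableEq Lab]

theorem cost_eq_sum_card_image_contactTag :
    cost π E sol = ∑ e ∈ E, (univ.image (contactTag π sol e)).card := by
  have hunion : univ.biUnion (contacts π E sol)
      = E.biUnion fun e => univ.image fun t => (e, contactTag π sol e t) := by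
    ext x
    simp only [mem_biUnion, mem_image, contacts, contactTag, mem_univ, true_and]
    exact ⟨fun ⟨t, e, he, hx⟩ => ⟨e, he, t, hx⟩, fun ⟨e, he, t, hx⟩ => ⟨t, e, he, hx⟩⟩
  have hdisj : (E : Set ((t : Fin k) → Vp t)).PairwiseDisjoint
      fun e => univ.image fun t => (e, contactTag π sol e t) := by
    intro e _ e' _ hne
    simp only [Function.onFun, disjoint_left, mem_image, mem_univ, true_and]
    rintro _ ⟨t, rfl⟩ ⟨t', h⟩
    exact hne (congrArg Prod.fst h).symm
  rw [cost, hunion, card_biUnion hdisj]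
  refine sum_congr rfl fun e _ => ?_
  rw [← card_image_of_injective (univ.image (contactTag π sol e)) (Prod.mk_right_injective e),
    image_image]
  rfl

theorem mul_card_le_cost_add (hval : Valid π E sol) :
    k * E.card ≤
      cost π E sol + k * (E.filter (WeaklySatisfies π (inducedLabeling sol))).card := by
  have hedge : ∀ e ∈ E, k ≤ (univ.image (contactTag π sol e)).card +
      if WeaklySatisfies π (inducedLabeling sol) e then k else 0 := by
    intro e he
    split_ifs with hws
    · exact Nat.le_add_left k _
    · rw [card_image_of_injective _ (injective_contactTag hval he hws), card_univ,
        Fintype.card_fin, add_zero]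
  calc k * E.card = ∑ _e ∈ E, k := by rw [sum_const, smul_eq_mul, mul_comm]
    _ ≤ ∑ e ∈ E, ((univ.image (contactTag π sol e)).card +
          if WeaklySatisfies π (inducedLabeling sol) e then k else 0) := sum_le_sum hedge
    _ = _ := by
      rw [sum_add_distrib, ← cost_eq_sum_card_image_contactTag, ← sum_filter, sum_const,
        smul_eq_mul, mul_comm]

end

variable [∀ t, DecidableEq (Vp t)] [DecidableEq Lab] [DecidableEq C]

theorem stmt11_general
    (π : ((t : Fin k) → Vp t) → Fin k → Lab → C)
    (E : Finset ((t : Fin k) → Vp t)) (ε : ℝ)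
    (hno : ∀ φ : (t : Fin k) → Vp t → Lab,
      ((E.filter (fun e => ∃ s s' : Fin k, s ≠ s' ∧
        π e s (φ s (e s)) = π e s' (φ s' (e s')))).card : ℝ) ≤ ε * E.card) :
    ∀ sol : Sol Vp Lab, Valid π E sol →
      (1 - ε) * E.card * k ≤ (cost π E sol : ℝ) := by
  intro sol hval
  have hweak : ((E.filter (WeaklySatisfies π (inducedLabeling sol))).card : ℝ) ≤ ε * E.card :=
    hno (inducedLabeling sol)
  have hcost : (k * E.card : ℝ) ≤
      cost π E sol + k * (E.filter (WeaklySatisfies π (inducedLabeling sol))).card := by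
    exact_mod_cast mul_card_le_cost_add hval
  linarith [mul_le_mul_of_nonneg_left hweak (Nat.cast_nonneg (α := ℝ) k)]

/-- if every labeling weakly satisfies at most `ε |E|` hyperedges,
then every feasible solution of the constructed k-DTSN instance has cost at least
`(1 - ε) |E| k`. -/
theorem stmt11 (hk : 0 < k)
    (π : ((t : Fin k) → Vp t) → Fin k → Lab → C)
    (E : Finset ((t : Fin k) → Vp t)) (ε : ℝ)
    (hno : ∀ φ : (t : Fin k) → Vp t → Lab,
      ((E.filter (fun e => ∃ s s' : Fin k, s ≠ s' ∧
        π e s (φ s (e s)) = π e s' (φ s' (e s')))).card : ℝ) ≤ ε * E.card) :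
    ∀ sol : Sol Vp Lab, Valid π E sol →
      (1 - ε) * E.card * k ≤ (cost π E sol : ℝ) :=
  stmt11_general π E ε hno

end TSNk
end

section
/- For a Monotonic Single-Source k-DTSN instance, composing the layered reduction to Directed Steiner Tree with an α(k)-approximation algorithm for DST yields an α(k)-approximation for the temporal problem: if the DST algorithm returns a solution of cost at most α(k)·OPT_DST, then the projected temporal solution has cost at most α(k)·OPT_temporal. -/
namespace LayeredReduction

open Relation Finset

variable {V : Type*}

def TemporalReach (E : ℕ → Set (V × V)) (H : Finset (V × V)) (n : ℕ) (a x : V) : Prop :=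
  ReflTransGen (fun u v => (u, v) ∈ H ∧ (u, v) ∈ E n) a x

theorem TemporalReach.mono_level {E : ℕ → Set (V × V)} (hmono : Monotone E)
    {H : Finset (V × V)} {m n : ℕ} (hmn : m ≤ n) {a x : V} (h : TemporalReach E H m a x) :
    TemporalReach E H n a x :=
  ReflTransGen.mono (fun _ _ huv => ⟨huv.1, hmono hmn huv.2⟩) _ _ h

theorem layerWeight_nonneg {w : V × V → ℝ} (hw : ∀ e, 0 ≤ w e) (p : (V × ℕ) × (V × ℕ)) :
    0 ≤ layerWeight w p := by
  unfold layerWeight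
  split
  exacts [hw _, le_rfl]

section Projection

variable [DecidableEq V] {E : ℕ → Set (V × V)} {G : Finset ((V × ℕ) × (V × ℕ))}

theorem sum_projSol_le {w : V × V → ℝ} (hw : ∀ e, 0 ≤ w e) :
    ∑ e ∈ projSol G, w e ≤ ∑ p ∈ G, layerWeight w p :=
  calc ∑ e ∈ projSol G, w e
      ≤ ∑ p ∈ G with p.1.2 = p.2.2, w (p.1.1, p.2.1) :=
        sum_image_le_of_nonneg fun e _ => hw e
    _ = ∑ p ∈ G with p.1.2 = p.2.2, layerWeight w p :=
        sum_congr rfl fun p hp => by simp [layerWeight, (mem_filter.mp hp).2]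
    _ ≤ ∑ p ∈ G, layerWeight w p :=
        sum_le_sum_of_subset_of_nonneg (filter_subset _ _)
          fun p _ _ => layerWeight_nonneg hw p

theorem reflTransGen_projSol (hmono : Monotone E) (hsub : ↑G ⊆ layerEdges E)
    {x y : V × ℕ} (h : ReflTransGen (fun p q => (p, q) ∈ G) x y) :
    x.2 ≤ y.2 ∧ TemporalReach E (projSol G) y.2 x.1 y.1 := by
  induction h with
  | refl => exact ⟨le_rfl, ReflTransGen.refl⟩
  | @tail p q _ hpq ih =>
    rcases hsub hpq with ⟨hlevel, hE⟩ | ⟨hvertex, hlevel⟩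
    · have hproj : (p.1, q.1) ∈ projSol G :=
        mem_image.mpr ⟨(p, q), mem_filter.mpr ⟨hpq, hlevel⟩, rfl⟩
      refine ⟨ih.1.trans hlevel.le, ReflTransGen.tail (ih.2.mono_level hmono hlevel.le)
        ⟨hproj, hlevel ▸ hE⟩⟩
    · have hpq_level : p.2 ≤ q.2 := hlevel ▸ p.2.le_succ
      exact ⟨ih.1.trans hpq_level, hvertex ▸ ih.2.mono_level hmono hpq_level⟩

end Projection

section Lift

variable [DecidableEq V] (E : ℕ → Set (V × V)) (H : Finset (V × V)) (a : V)

def activeLevels (e : V × V) : Set ℕ :=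
  {n | e ∈ E n ∧ TemporalReach E H n a e.1}

noncomputable def liftLevel (e : V × V) : ℕ :=
  sInf (activeLevels E H a e)

def verticalEdges (X : Finset V) (N : ℕ) : Finset ((V × ℕ) × (V × ℕ)) :=
  (X ×ˢ range N).image fun q => ((q.1, q.2), (q.1, q.2 + 1))

-- Edges without an active level are dropped: `sInf ∅ = 0` would put them at a level where
-- they need not exist.
open Classical in
noncomputable def horizontalLift : Finset ((V × ℕ) × (V × ℕ)) :=
  {e ∈ H | (activeLevels E H a e).Nonempty}.image fun e =>
    ((e.1, liftLevel E H a e), (e.2, liftLevel E H a e))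

noncomputable def liftSol (N : ℕ) : Finset ((V × ℕ) × (V × ℕ)) :=
  horizontalLift E H a ∪ verticalEdges (insert a (H.image Prod.snd)) N

variable {E H a}

theorem reflTransGen_verticalEdges {X : Finset V} {N m n : ℕ} {x : V} (hx : x ∈ X)
    (hmn : m ≤ n) (hnN : n ≤ N) :
    ReflTransGen (fun p q => (p, q) ∈ verticalEdges X N) (x, m) (x, n) := by
  induction n, hmn using Nat.le_induction with
  | base => exact ReflTransGen.refl
  | succ n _ ih =>
    exact (ih (by omega)).tail
      (mem_image.mpr ⟨(x, n), mem_product.mpr ⟨hx, mem_range.mpr (by omega)⟩, rfl⟩)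

theorem horizontal_mem_liftSol {N : ℕ} {e : V × V} (he : e ∈ H)
    (hactive : (activeLevels E H a e).Nonempty) :
    ((e.1, liftLevel E H a e), (e.2, liftLevel E H a e)) ∈ liftSol E H a N := by
  classical
  exact mem_union_left _ (mem_image.mpr ⟨e, mem_filter.mpr ⟨he, hactive⟩, rfl⟩)

theorem liftSol_subset_layerEdges {N : ℕ} : ↑(liftSol E H a N) ⊆ layerEdges E := by
  classical
  intro p hp
  rcases mem_union.mp hp with hp | hp
  · obtain ⟨e, he, rfl⟩ := mem_image.mp hp
    exact Or.inl ⟨rfl, (Nat.sInf_mem (mem_filter.mp he).2).1⟩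
  · obtain ⟨q, _, rfl⟩ := mem_image.mp hp
    exact Or.inr ⟨rfl, rfl⟩

theorem sum_layerWeight_liftSol_le {w : V × V → ℝ} (hw : ∀ e, 0 ≤ w e) {N : ℕ} :
    ∑ p ∈ liftSol E H a N, layerWeight w p ≤ ∑ e ∈ H, w e := by
  classical
  have hvertical_free : ∀ p ∈ liftSol E H a N, p ∉ horizontalLift E H a →
      layerWeight w p = 0 := by
    intro p hp hnot
    obtain ⟨q, _, rfl⟩ := mem_image.mp ((mem_union.mp hp).resolve_left hnot)
    simp [layerWeight]
  calc ∑ p ∈ liftSol E H a N, layerWeight w p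
      = ∑ p ∈ horizontalLift E H a, layerWeight w p :=
        (sum_subset subset_union_left hvertical_free).symm
    _ ≤ ∑ e ∈ H with (activeLevels E H a e).Nonempty,
          layerWeight w ((e.1, liftLevel E H a e), (e.2, liftLevel E H a e)) :=
        sum_image_le_of_nonneg fun p _ => layerWeight_nonneg hw p
    _ = ∑ e ∈ H with (activeLevels E H a e).Nonempty, w e :=
        sum_congr rfl fun e _ => by simp [layerWeight]
    _ ≤ ∑ e ∈ H, w e :=
        sum_le_sum_of_subset_of_nonneg (filter_subset _ _) fun e _ _ => hw e

theorem reflTransGen_liftSol {N n : ℕ} (hnN : n ≤ N) {x : V} (hx : TemporalReach E H n a x) :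
    ReflTransGen (fun p q => (p, q) ∈ liftSol E H a N) (a, 0) (x, n) := by
  have vertical : ∀ {y : V} {m n : ℕ}, y ∈ insert a (H.image Prod.snd) → m ≤ n → n ≤ N →
      ReflTransGen (fun p q => (p, q) ∈ liftSol E H a N) (y, m) (y, n) :=
    fun hy hmn hnN => ReflTransGen.mono (fun _ _ h => mem_union_right _ h) _ _
      (reflTransGen_verticalEdges hy hmn hnN)
  induction n using Nat.strong_induction_on generalizing x with
  | _ n IH =>
    induction hx with
    | refl => exact vertical (mem_insert_self a _) n.zero_le hnN
    | @tail u v hprefix huv ih =>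
      have hn_active : n ∈ activeLevels E H a (u, v) := ⟨huv.2, hprefix⟩
      have hℓ_active := Nat.sInf_mem ⟨n, hn_active⟩
      have hℓn : liftLevel E H a (u, v) ≤ n := Nat.sInf_le hn_active
      have hu : ReflTransGen (fun p q => (p, q) ∈ liftSol E H a N)
          (a, 0) (u, liftLevel E H a (u, v)) := by
        rcases hℓn.lt_or_eq with hlt | heq
        · exact IH _ hlt (hlt.le.trans hnN) hℓ_active.2
        · exact heq ▸ ih
      exact (hu.tail (horizontal_mem_liftSol huv.1 ⟨n, hn_active⟩)).trans
        (vertical (mem_insert_of_mem (mem_image_of_mem _ huv.1)) hℓn hnN)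

end Lift

end LayeredReduction

open LayeredReduction

theorem stmt17_general {V : Type*} [DecidableEq V] {k : ℕ}
    (E : ℕ → Set (V × V)) (hmono : Monotone E)
    (w : V × V → ℝ) (hw : ∀ e, 0 ≤ w e)
    (a : V) (b : Fin k → V) (t : Fin k → ℕ)
    (α : ℝ) (hα : 0 ≤ α)
    (Hdst : Finset ((V × ℕ) × (V × ℕ))) (hsub : ↑Hdst ⊆ layerEdges E)
    (hfeas : ∀ i, Relation.ReflTransGen (fun x y => (x, y) ∈ Hdst) (a, 0) (b i, t i))
    (happrox : ∀ H' : Finset ((V × ℕ) × (V × ℕ)), ↑H' ⊆ layerEdges E →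
      (∀ i, Relation.ReflTransGen (fun x y => (x, y) ∈ H') (a, 0) (b i, t i)) →
      (∑ e ∈ Hdst, layerWeight w e) ≤ α * ∑ e ∈ H', layerWeight w e) :
    (∀ i, Relation.ReflTransGen
      (fun u v => (u, v) ∈ projSol Hdst ∧ (u, v) ∈ E (t i)) a (b i)) ∧
    (∀ H : Finset (V × V),
      (∀ i, Relation.ReflTransGen
        (fun u v => (u, v) ∈ H ∧ (u, v) ∈ E (t i)) a (b i)) →
      (∑ e ∈ projSol Hdst, w e) ≤ α * ∑ e ∈ H, w e) := by
  refine ⟨fun i => (reflTransGen_projSol hmono hsub (hfeas i)).2, fun H hH => ?_⟩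
  set N := Finset.univ.sup t
  have hlift_feas : ∀ i, Relation.ReflTransGen (fun p q => (p, q) ∈ liftSol E H a N)
      (a, 0) (b i, t i) :=
    fun i => reflTransGen_liftSol (Finset.le_sup (Finset.mem_univ i)) (hH i)
  calc ∑ e ∈ projSol Hdst, w e
      ≤ ∑ p ∈ Hdst, layerWeight w p := sum_projSol_le hw
    _ ≤ α * ∑ p ∈ liftSol E H a N, layerWeight w p :=
        happrox _ liftSol_subset_layerEdges hlift_feas
    _ ≤ α * ∑ e ∈ H, w e := by gcongr; exact sum_layerWeight_liftSol_le hw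

/-- composing the layered reduction with an `α`-approximation
algorithm for Directed Steiner Tree yields an `α`-approximation for Monotonic
Single-Source k-DTSN: if `Hdst` is a DST solution of cost at most `α · OPT_DST`,
then its projection is feasible for the temporal instance and has cost at most
`α · OPT_temporal`. -/
theorem stmt17 {V : Type*} [DecidableEq V] {k : ℕ}
    (E : ℕ → Set (V × V)) (hmono : Monotone E)
    (w : V × V → ℝ) (hw : ∀ e, 0 ≤ w e)
    (a : V) (b : Fin k → V) (t : Fin k → ℕ) (ht : Monotone t)
    (α : ℝ) (hα : 0 ≤ α)
    (Hdst : Finset ((V × ℕ) × (V × ℕ))) (hsub : ↑Hdst ⊆ layerEdges E)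
    (hfeas : ∀ i, Relation.ReflTransGen (fun x y => (x, y) ∈ Hdst) (a, 0) (b i, t i))
    (happrox : ∀ H' : Finset ((V × ℕ) × (V × ℕ)), ↑H' ⊆ layerEdges E →
      (∀ i, Relation.ReflTransGen (fun x y => (x, y) ∈ H') (a, 0) (b i, t i)) →
      (∑ e ∈ Hdst, layerWeight w e) ≤ α * ∑ e ∈ H', layerWeight w e) :
    (∀ i, Relation.ReflTransGen
      (fun u v => (u, v) ∈ projSol Hdst ∧ (u, v) ∈ E (t i)) a (b i)) ∧
    (∀ H : Finset (V × V),
      (∀ i, Relation.ReflTransGen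
        (fun u v => (u, v) ∈ H ∧ (u, v) ∈ E (t i)) a (b i)) →
      (∑ e ∈ projSol Hdst, w e) ≤ α * ∑ e ∈ H, w e) :=
  stmt17_general E hmono w hw a b t α hα Hdst hsub hfeas happrox
end
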